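/- arXiv:1311.1916 — 8 statements merged into one kernel-verified Lean document; each statement's English description precedes it below -/
import Mathlib

section
/- Let A be a set with a binary operation s and element 0, and let n ≥ 2. Suppose there are binary operations s₁, …, s_{n-1} built from the algebra's operations satisfying s₁(x,x) = 0, sᵢ(x,0) = s_{i+1}(x,x) for 1 ≤ i ≤ n−2, and s_{n-1}(x,0) = x. Then for every compatible preorder ≤ on A and every a ∈ A: a ≤ 0 implies 0 ≤ a, and 0 ≤ a implies a ≤ 0. In particular, with respect to any compatible partial order, no element a ≠ 0 is comparable with 0. -/
/-!
If `a ≤ 0`, monotonicity in the second argument gives `sᵢ(a,a) ≤ sᵢ(a,0) = sᵢ₊₁(a,a)`, so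
`0 = s₁(a,a) ≤ s₂(a,a) ≤ ⋯ ≤ sₙ₋₁(a,a) ≤ sₙ₋₁(a,0) = a`. The converse implication is the same
argument for the opposite preorder.
-/

section

variable {A : Type*} {n : ℕ} {s : ℕ → A → A → A} {z : A} {le : A → A → Prop}

theorem le_diag_of_le_zero
    (h1 : ∀ x, s 1 x x = z)
    (h2 : ∀ i, 1 ≤ i → i ≤ n - 2 → ∀ x, s i x z = s (i + 1) x x)
    (hrefl : ∀ a, le a a)
    (htrans : ∀ a b c, le a b → le b c → le a c)
    (hmono : ∀ i, 1 ≤ i → i ≤ n - 1 → ∀ x b b', le b b' → le (s i x b) (s i x b'))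
    {a : A} (ha : le a z) :
    ∀ i, 1 ≤ i → i ≤ n - 1 → le z (s i a a) := by
  intro i hi
  induction i, hi using Nat.le_induction with
  | base => intro _; rw [h1]; exact hrefl z
  | succ i hi ih =>
    intro hin
    have step : le (s i a a) (s (i + 1) a a) := by
      rw [← h2 i hi (by omega) a]
      exact hmono i hi (by omega) a a z ha
    exact htrans _ _ _ (ih (by omega)) step

theorem zero_le_of_le_zero (hn : 2 ≤ n)
    (h1 : ∀ x, s 1 x x = z)
    (h2 : ∀ i, 1 ≤ i → i ≤ n - 2 → ∀ x, s i x z = s (i + 1) x x)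
    (h3 : ∀ x, s (n - 1) x z = x)
    (hrefl : ∀ a, le a a)
    (htrans : ∀ a b c, le a b → le b c → le a c)
    (hmono : ∀ i, 1 ≤ i → i ≤ n - 1 → ∀ x b b', le b b' → le (s i x b) (s i x b'))
    {a : A} (ha : le a z) :
    le z a := by
  have hlast : le (s (n - 1) a a) a := by
    simpa only [h3 a] using hmono (n - 1) (by omega) le_rfl a a z ha
  exact htrans _ _ _ (le_diag_of_le_zero h1 h2 hrefl htrans hmono ha (n - 1) (by omega) le_rfl)
    hlast

end

/-- In an `n`-subtractive algebra, every compatible preorder is `0`-symmetric: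
`a ≤ 0 ↔ 0 ≤ a`. -/
theorem n_subtractive_zero_symmetric {A : Type*} (n : ℕ) (hn : 2 ≤ n)
    (s : ℕ → A → A → A) (z : A)
    (h1 : ∀ x, s 1 x x = z)
    (h2 : ∀ i, 1 ≤ i → i ≤ n - 2 → ∀ x, s i x z = s (i + 1) x x)
    (h3 : ∀ x, s (n - 1) x z = x)
    (le : A → A → Prop)
    (hrefl : ∀ a, le a a)
    (htrans : ∀ a b c, le a b → le b c → le a c)
    (hmono : ∀ i, 1 ≤ i → i ≤ n - 1 →
      ∀ a b a' b', le a b → le a' b' → le (s i a a') (s i b b'))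
    (a : A) :
    (le a z → le z a) ∧ (le z a → le a z) :=
  ⟨zero_le_of_le_zero hn h1 h2 h3 hrefl htrans
      (fun i hi hin x _ _ h => hmono i hi hin x x _ _ (hrefl x) h),
    zero_le_of_le_zero (le := flip le) hn h1 h2 h3 hrefl
      (fun a b c hab hbc => htrans c b a hbc hab)
      (fun i hi hin x _ _ h => hmono i hi hin x x _ _ (hrefl x) h)⟩
end

section
/- Let A be a subtractive algebra (with binary operation s and constant 0 satisfying s(x,x) = 0 and s(x,0) = x) equipped with a T0 topology for which s is separately continuous. Then the singleton set {0} is closed in A. -/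
/-! The map `x ↦ s y x` is continuous and swaps `0` and `y`, so any specialization `0 ⤳ y` is
reversed into `y ⤳ 0`; in a T0 space this forces `y = 0`. -/

section

variable {X : Type*} [TopologicalSpace X]

theorem Specializes.symm_of_continuous_swap {f : X → X} {x y : X} (h : x ⤳ y)
    (hf : Continuous f) (hx : f x = y) (hy : f y = x) : y ⤳ x :=
  hx ▸ hy ▸ h.map hf

theorem isClosed_singleton_of_forall_specializes_symm [T0Space X] {x : X}
    (h : ∀ y, x ⤳ y → y ⤳ x) : IsClosed ({x} : Set X) := by
  rw [← closure_subset_iff_isClosed]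
  intro y hy
  have hxy : x ⤳ y := specializes_iff_mem_closure.2 hy
  exact (hxy.antisymm (h y hxy)).eq.symm

end

theorem subtractive_zero_closed_general {A : Type*} [TopologicalSpace A] [T0Space A]
    (s : A → A → A) (z : A)
    (h1 : ∀ x, s x x = z) (h2 : ∀ x, s x z = x)
    (hc1 : ∀ a : A, Continuous (s a)) :
    IsClosed ({z} : Set A) :=
  isClosed_singleton_of_forall_specializes_symm fun y hzy =>
    hzy.symm_of_continuous_swap (hc1 y) (h2 y) (h1 y)

/-- In a subtractive T0 semitopological algebra, the singleton `{0}` is closed. -/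
theorem subtractive_zero_closed {A : Type*} [TopologicalSpace A] [T0Space A]
    (s : A → A → A) (z : A)
    (h1 : ∀ x, s x x = z) (h2 : ∀ x, s x z = x)
    (hc1 : ∀ a : A, Continuous (s a))
    (hc2 : ∀ a : A, Continuous (fun x => s x a)) :
    IsClosed ({z} : Set A) :=
  subtractive_zero_closed_general s z h1 h2 hc1
end

section
/- Let (A, τ) be a T0 topological space and s : A × A → A a continuous binary operation satisfying s(x,x) = 0 and s(x,0) = x for all x ∈ A (a 2-subtractive topological algebra). Then for all a, b ∈ A with s(a,b) ≠ 0, the points a and b are T_{2½}-separated (they have open neighbourhoods with disjoint closures). In particular, every a ≠ 0 is T_{2½}-separated from 0. -/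
/-!
Since `s` sends every diagonal point to `0`, any box `U × V` that `s` maps into an open set
missing `0` has `U ∩ V = ∅`. Applied at `(s a b, 0)` with the open set `A ∖ {0}` (`0` is a
closed point by T0 and `s(x, 0) = x`), this gives an open `W ∋ s a b` whose closure misses `0`.
Now take a box `U × V` around `(a, b)` that `s` maps into `W`. By continuity `s` maps
`closure U × closure V` into `closure W`, while it maps every diagonal point to `0 ∉ closure W`;
hence the closures of `U` and `V` are disjoint.
-/

section Diagonal

variable {X Y : Type*} [TopologicalSpace X] [TopologicalSpace Y]

def T25Separated (a b : X) : Prop :=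
  ∃ U V : Set X, IsOpen U ∧ IsOpen V ∧ a ∈ U ∧ b ∈ V ∧ closure U ∩ closure V = ∅

lemma separatedNhds_of_apply_mem_of_diag_notMem {f : X × X → Y} (hf : Continuous f)
    {W : Set Y} (hW : IsOpen W) {a b : X} (hab : f (a, b) ∈ W) (hdiag : ∀ x, f (x, x) ∉ W) :
    SeparatedNhds {a} {b} := by
  obtain ⟨U, V, hU, hV, haU, hbV, hUV⟩ := isOpen_prod_iff.1 (hW.preimage hf) a b hab
  refine ⟨U, V, hU, hV, by simpa, by simpa, Set.disjoint_left.2 fun x hxU hxV => ?_⟩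
  exact hdiag x (hUV ⟨hxU, hxV⟩)

lemma t25Separated_of_apply_mem_of_diag_notMem_closure {f : X × X → Y} (hf : Continuous f)
    {W : Set Y} (hW : IsOpen W) {a b : X} (hab : f (a, b) ∈ W)
    (hdiag : ∀ x, f (x, x) ∉ closure W) : T25Separated a b := by
  obtain ⟨U, V, hU, hV, haU, hbV, hUV⟩ := isOpen_prod_iff.1 (hW.preimage hf) a b hab
  refine ⟨U, V, hU, hV, haU, hbV, Set.eq_empty_of_forall_notMem fun x ⟨hxU, hxV⟩ => ?_⟩
  have hx : (x, x) ∈ closure (U ×ˢ V) := by rw [closure_prod_eq]; exact ⟨hxU, hxV⟩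
  exact hdiag x (hf.closure_preimage_subset W (closure_mono hUV hx))

end Diagonal

section Subtractive

variable {A : Type*} [TopologicalSpace A] {s : A → A → A} {z : A}

lemma isClosed_singleton_of_sub_self [T0Space A] (hc : Continuous fun p : A × A => s p.1 p.2)
    (h1 : ∀ x, s x x = z) (h2 : ∀ x, s x z = x) : IsClosed ({z} : Set A) := by
  refine closure_subset_iff_isClosed.1 fun x hx => ?_
  have hzx : z ⤳ x := specializes_iff_mem_closure.2 hx
  have hxz : x ⤳ z := by simpa only [h1, h2] using ((specializes_refl x).prod hzx).map hc
  exact (hxz.antisymm hzx).eq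

lemma t25Separated_of_sub_ne [T0Space A] (hc : Continuous fun p : A × A => s p.1 p.2)
    (h1 : ∀ x, s x x = z) (h2 : ∀ x, s x z = x) {a b : A} (hab : s a b ≠ z) :
    T25Separated a b := by
  have hz : IsClosed ({z} : Set A) := isClosed_singleton_of_sub_self hc h1 h2
  obtain ⟨W, V, hW, hV, habW, hzV, hWV⟩ : SeparatedNhds {s a b} {z} :=
    separatedNhds_of_apply_mem_of_diag_notMem hc hz.isOpen_compl
      (by simpa [h2] using hab) (by simp [h1])
  have hzW : z ∉ closure W :=
    Set.disjoint_left.1 (hWV.closure_left hV).symm (hzV rfl)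
  exact t25Separated_of_apply_mem_of_diag_notMem_closure hc hW (habW rfl)
    (fun x => by simpa only [h1] using hzW)

end Subtractive

/-- In a 2-subtractive T0 topological algebra, `s a b ≠ 0` implies that `a` and
`b` are T2½-separated; in particular every `a ≠ 0` is T2½-separated from `0`. -/
theorem two_subtractive_t2half {A : Type*} [TopologicalSpace A] [T0Space A]
    (s : A → A → A) (z : A)
    (hc : Continuous fun p : A × A => s p.1 p.2)
    (h1 : ∀ x, s x x = z) (h2 : ∀ x, s x z = x) :
    (∀ a b : A, s a b ≠ z →
      ∃ U V : Set A, IsOpen U ∧ IsOpen V ∧ a ∈ U ∧ b ∈ V ∧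
        closure U ∩ closure V = ∅) ∧
    (∀ a : A, a ≠ z →
      ∃ U V : Set A, IsOpen U ∧ IsOpen V ∧ a ∈ U ∧ z ∈ V ∧
        closure U ∩ closure V = ∅) :=
  ⟨fun _ _ hab => t25Separated_of_sub_ne hc h1 h2 hab,
    fun a ha => t25Separated_of_sub_ne hc h1 h2 (b := z) (by rwa [h2])⟩
end

section
/- Let (A, τ) be a topological space with a separately continuous binary operation t : A × A → A, and let a, b ∈ A satisfy t(a,a) = t(b,b) and t(a,b) ≠ t(a,a). If t(a,b) and t(a,a) are T0-separated (some open set contains exactly one of them), then a and b are T1-separated: a has an open neighbourhood not containing b and b has an open neighbourhood not containing a. -/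
/-!
The maps `t a` and `(t · b)` send the pair `(a, b)` to `(t a a, t a b)` and to
`(t a b, t b b) = (t a b, t a a)` respectively. A specialization between `a` and `b` in
either direction is carried by these two continuous maps to specializations in both directions
between `t a a` and `t a b`, making them inseparable, which the T0 hypothesis forbids.
-/

theorem Specializes.inseparable_of_map_swap {X Y : Type*} [TopologicalSpace X]
    [TopologicalSpace Y] {f g : X → Y} {a b : X} (hf : Continuous f) (hg : Continuous g)
    (hfa : f a = g b) (hfb : f b = g a) (h : a ⤳ b) : Inseparable (f a) (f b) :=
  inseparable_iff_specializes_and.2 ⟨h.map hf, hfb ▸ hfa ▸ h.map hg⟩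

theorem t0_to_t1_separation_general {A : Type*} [TopologicalSpace A]
    (t : A → A → A)
    (hc1 : ∀ c : A, Continuous (t c))
    (hc2 : ∀ c : A, Continuous (fun x => t x c))
    (a b : A)
    (hdiag : t a a = t b b)
    (hT0 : ∃ U : Set A, IsOpen U ∧
      ((t a b ∈ U ∧ t a a ∉ U) ∨ (t a a ∈ U ∧ t a b ∉ U))) :
    (∃ U : Set A, IsOpen U ∧ a ∈ U ∧ b ∉ U) ∧
    (∃ V : Set A, IsOpen V ∧ b ∈ V ∧ a ∉ V) := by
  have hsep : ¬Inseparable (t a b) (t a a) := not_inseparable_iff_exists_open.2 hT0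
  have hba : ¬b ⤳ a := fun h =>
    hsep (h.inseparable_of_map_swap (hc1 a) (hc2 b) rfl hdiag)
  have hab : ¬a ⤳ b := fun h =>
    hsep (h.inseparable_of_map_swap (hc1 a) (hc2 b) hdiag rfl).symm
  exact ⟨not_specializes_iff_exists_open.1 hba, not_specializes_iff_exists_open.1 hab⟩

/-- If `t` is separately continuous, `t a a = t b b`, `t a b ≠ t a a`, and
`t a b` and `t a a` are T0-separated, then `a` and `b` are T1-separated. -/
theorem t0_to_t1_separation {A : Type*} [TopologicalSpace A]
    (t : A → A → A)
    (hc1 : ∀ c : A, Continuous (t c))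
    (hc2 : ∀ c : A, Continuous (fun x => t x c))
    (a b : A)
    (hdiag : t a a = t b b)
    (hne : t a b ≠ t a a)
    (hT0 : ∃ U : Set A, IsOpen U ∧
      ((t a b ∈ U ∧ t a a ∉ U) ∨ (t a a ∈ U ∧ t a b ∉ U))) :
    (∃ U : Set A, IsOpen U ∧ a ∈ U ∧ b ∉ U) ∧
    (∃ V : Set A, IsOpen V ∧ b ∈ V ∧ a ∉ V) :=
  t0_to_t1_separation_general t hc1 hc2 a b hdiag hT0
end

section
/- Let (A, τ) be an n-subtractive T0 topological algebra (all operations sᵢ jointly continuous, {0} closed and T1-separated from all other points). Then for every a ∈ A \ {0}, a ∈ Σ_{κ(a)}, i.e., there exist open sets U ∋ a and V ∋ 0 with U ∩ V ⊆ R_{κ(a)−1}, where κ(a) is the rank of a, Rⱼ is the set of nonzero elements of rank ≤ j, and R₀ = ∅. Consequently Σ_{n-1} = A \ {0}. -/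
/-! The point `0` is closed: if `0 ⤳ c`, continuity turns this into
`s_{i+1}(c, 0) ⤳ s_{i+1}(c, c) = s_i(c, 0)`, and chaining these from `s_1(c, c) = 0` up to
`s_{n-1}(c, 0) = c` gives `c ⤳ 0`, so `c = 0` by T0. Hence if `s_k(a, 0) ≠ 0`, some open
`W ∋ s_k(a, 0)` misses `0`, and continuity at `(a, 0)` gives open `U ∋ a`, `V ∋ 0` with
`s_k(b, b) ∈ W` for `b ∈ U ∩ V`. For such `b`, `s_{k-1}(b, 0) = s_k(b, b) ≠ 0` (and `k = 1` is
impossible), so `b` has rank at most `k - 1`. -/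

/-- The set of nonzero elements of rank at most `i` in an `n`-subtractive algebra. -/
def rankAtMost {A : Type*} (s : ℕ → A → A → A) (z : A) (i : ℕ) : Set A :=
  {a | a ≠ z ∧ ∃ k, 1 ≤ k ∧ k ≤ i ∧ s k a z ≠ z ∧ ∀ j, 1 ≤ j → j < k → s j a z = z}

/-- `Σ i`: points separable from `0` modulo elements of rank `< i`. -/
def sigmaSet {A : Type*} [TopologicalSpace A] (s : ℕ → A → A → A) (z : A) (i : ℕ) : Set A :=
  {a | ∃ U V : Set A, IsOpen U ∧ IsOpen V ∧ a ∈ U ∧ z ∈ V ∧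
    U ∩ V ⊆ rankAtMost s z (i - 1)}

structure IsSubtractive {A : Type*} (n : ℕ) (s : ℕ → A → A → A) (z : A) : Prop where
  sub_self : ∀ x, s 1 x x = z
  sub_zero_eq_succ_sub_self : ∀ i, 1 ≤ i → i ≤ n - 2 → ∀ x, s i x z = s (i + 1) x x
  last_sub_zero : ∀ x, s (n - 1) x z = x

theorem mem_rankAtMost_of_apply_ne {A : Type*} {s : ℕ → A → A → A} {z b : A} {m i : ℕ}
    (hb : b ≠ z) (hm : 1 ≤ m) (hmi : m ≤ i) (hbm : s m b z ≠ z) : b ∈ rankAtMost s z i := by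
  classical
  have hex : ∃ k, 1 ≤ k ∧ s k b z ≠ z := ⟨m, hm, hbm⟩
  obtain ⟨hk, hbk⟩ := Nat.find_spec hex
  refine ⟨hb, Nat.find hex, hk, (Nat.find_min' hex ⟨hm, hbm⟩).trans hmi, hbk, fun j hj hjk => ?_⟩
  by_contra hbj
  exact Nat.find_min hex hjk ⟨hj, hbj⟩

theorem zero_notMem_sigmaSet {A : Type*} [TopologicalSpace A] (s : ℕ → A → A → A) (z : A)
    (i : ℕ) : z ∉ sigmaSet s z i := by
  rintro ⟨U, V, -, -, hzU, hzV, hUV⟩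
  exact (hUV ⟨hzU, hzV⟩).1 rfl

namespace IsSubtractive

variable {A : Type*} {n : ℕ} {s : ℕ → A → A → A} {z : A}

theorem apply_zero_zero (hs : IsSubtractive n s z) :
    ∀ i, 1 ≤ i → i ≤ n - 1 → s i z z = z
  | 0, h, _ => absurd h (by omega)
  | 1, _, _ => hs.sub_self z
  | i + 2, _, hi => by
    rw [← hs.sub_zero_eq_succ_sub_self (i + 1) (by omega) (by omega)]
    exact hs.apply_zero_zero (i + 1) (by omega) (by omega)

variable [TopologicalSpace A]

theorem apply_specializes_zero (hs : IsSubtractive n s z)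
    (hcont : ∀ i, 1 ≤ i → i ≤ n - 1 → Continuous (fun p : A × A => s i p.1 p.2))
    {c : A} (hc : z ⤳ c) : ∀ i, 1 ≤ i → i ≤ n - 1 → s i c z ⤳ z
  | 0, h, _ => absurd h (by omega)
  | i + 1, _, hi => by
    have hstep : s (i + 1) c z ⤳ s (i + 1) c c :=
      (specializes_rfl.prod hc).map (hcont (i + 1) (by omega) hi)
    rcases Nat.eq_zero_or_pos i with rfl | hi0
    · rwa [hs.sub_self] at hstep
    · rw [← hs.sub_zero_eq_succ_sub_self i hi0 (by omega)] at hstep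
      exact hstep.trans (hs.apply_specializes_zero hcont hc i hi0 (by omega))

theorem eq_zero_of_zero_specializes [T0Space A] (hs : IsSubtractive n s z) (hn : 2 ≤ n)
    (hcont : ∀ i, 1 ≤ i → i ≤ n - 1 → Continuous (fun p : A × A => s i p.1 p.2))
    {c : A} (hc : z ⤳ c) : c = z := by
  have hcz : c ⤳ z := by
    simpa only [hs.last_sub_zero] using hs.apply_specializes_zero hcont hc (n - 1) (by omega) le_rfl
  exact (hcz.antisymm hc).eq

theorem mem_sigmaSet [T0Space A] (hs : IsSubtractive n s z) (hn : 2 ≤ n)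
    (hcont : ∀ i, 1 ≤ i → i ≤ n - 1 → Continuous (fun p : A × A => s i p.1 p.2))
    {a : A} {k : ℕ} (hk : 1 ≤ k) (hkn : k ≤ n - 1) (hak : s k a z ≠ z) :
    a ∈ sigmaSet s z k := by
  obtain ⟨W, hW, haW, hzW⟩ := not_specializes_iff_exists_open.1
    fun h => hak (hs.eq_zero_of_zero_specializes hn hcont h)
  obtain ⟨U, V, hU, hV, haU, hzV, hUV⟩ :=
    isOpen_prod_iff.1 ((hcont k hk hkn).isOpen_preimage W hW) a z haW
  refine ⟨U, V, hU, hV, haU, hzV, fun b ⟨hbU, hbV⟩ => ?_⟩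
  have hbb : s k b b ≠ z := fun h => hzW (h ▸ hUV (Set.mk_mem_prod hbU hbV))
  obtain ⟨k, rfl⟩ : ∃ m, k = m + 1 := Nat.exists_eq_add_one.2 hk
  have hm : 1 ≤ k := Nat.pos_of_ne_zero fun h => hbb (h ▸ hs.sub_self b)
  have hbm : s k b z ≠ z := by rwa [hs.sub_zero_eq_succ_sub_self k hm (by omega)]
  have hbz : b ≠ z := fun h => hbm (h ▸ hs.apply_zero_zero k hm (by omega))
  exact mem_rankAtMost_of_apply_ne hbz hm le_rfl hbm

end IsSubtractive

/-- In an `n`-subtractive T0 topological algebra, every nonzero `a` lies in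
`Σ (κ a)` where `κ a` is its rank; consequently `Σ (n-1) = A \ {0}`. -/
theorem sigma_rank_membership {A : Type*} [TopologicalSpace A] [T0Space A]
    (n : ℕ) (hn : 2 ≤ n)
    (s : ℕ → A → A → A) (z : A)
    (h1 : ∀ x, s 1 x x = z)
    (h2 : ∀ i, 1 ≤ i → i ≤ n - 2 → ∀ x, s i x z = s (i + 1) x x)
    (h3 : ∀ x, s (n - 1) x z = x)
    (hcont : ∀ i, 1 ≤ i → i ≤ n - 1 → Continuous (fun p : A × A => s i p.1 p.2)) :
    (∀ a : A, a ≠ z → ∀ k, 1 ≤ k → k ≤ n - 1 → s k a z ≠ z →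
      (∀ j, 1 ≤ j → j < k → s j a z = z) → a ∈ sigmaSet s z k) ∧
    sigmaSet s z (n - 1) = {z}ᶜ := by
  have hs : IsSubtractive n s z := ⟨h1, h2, h3⟩
  refine ⟨fun a _ k hk hkn hak _ => hs.mem_sigmaSet hn hcont hk hkn hak, ?_⟩
  ext a
  refine ⟨fun ha haz => zero_notMem_sigmaSet s z _ (haz ▸ ha), fun ha => ?_⟩
  exact hs.mem_sigmaSet hn hcont (by omega) le_rfl (by rwa [h3])
end

section
/- Let (A, τ) be an n-subtractive T0 topological algebra and define Γ₀(0) = ∅ and Γ_{i+1}(0) = {b : ∃ open U ∋ 0 and V ∋ b with U ∩ V ⊆ Γᵢ(0)}. Then Γ_{n-1}(0) = A \ {0}; that is, A is (n−1)-step Hausdorff at the point 0. -/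
/-!
If `z ⤳ a`, then applying the continuous maps `sᵢ a ·` to it and chaining with the identities
`s₁(a,a) = z`, `sᵢ(a,a) = sᵢ₋₁(a,z)` and `sₙ₋₁(a,z) = a` gives
`a = sₙ₋₁(a,z) ⤳ sₙ₋₁(a,a) = sₙ₋₂(a,z) ⤳ ⋯ ⤳ s₁(a,z) ⤳ s₁(a,a) = z`, so in a T0 space `a = z`.
Hence every `a ≠ z` has an open neighbourhood `O` missing `z`. Then `sᵢ(a,z) ∈ O` forces
`a ∈ Γᵢ(z)` by induction on `i`: a box `V × U ∋ (a, z)` inside the preimage of `O` under `sᵢ`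
has `U ∩ V ⊆ {x | sᵢ(x,x) ∈ O} = {x | sᵢ₋₁(x,z) ∈ O} ⊆ Γᵢ₋₁(z)`.
-/

/-- Coleman's iterated separation sets at the point `z`. -/
def gammaSet {A : Type*} [TopologicalSpace A] (z : A) : ℕ → Set A
  | 0 => ∅
  | (i + 1) => {b | ∃ U V : Set A, IsOpen U ∧ IsOpen V ∧ z ∈ U ∧ b ∈ V ∧
      U ∩ V ⊆ gammaSet z i}

section GammaSet

variable {A : Type*} [TopologicalSpace A]

theorem notMem_gammaSet (z : A) : ∀ k, z ∉ gammaSet z k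
  | 0 => id
  | k + 1 => fun ⟨_, _, _, _, hzU, hzV, hsub⟩ => notMem_gammaSet z k (hsub ⟨hzU, hzV⟩)

theorem mem_gammaSet_succ_of_continuous {f : A → A → A}
    (hf : Continuous fun p : A × A => f p.1 p.2) {z a : A} {O : Set A} (hO : IsOpen O)
    (ha : f a z ∈ O) {i : ℕ} (hdiag : ∀ x, f x x ∈ O → x ∈ gammaSet z i) :
    a ∈ gammaSet z (i + 1) := by
  obtain ⟨V, U, hV, hU, haV, hzU, hbox⟩ :=
    isOpen_prod_iff.mp (hO.preimage hf) a z ha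
  exact ⟨U, V, hU, hV, hzU, haV, fun x hx => hdiag x (@hbox (x, x) ⟨hx.2, hx.1⟩)⟩

end GammaSet

section Subtractive

variable {A : Type*} [TopologicalSpace A] {n : ℕ} {s : ℕ → A → A → A} {z : A}

theorem subtractive_specializes_of_specializes (h1 : ∀ x, s 1 x x = z)
    (h2 : ∀ i, 1 ≤ i → i ≤ n - 2 → ∀ x, s i x z = s (i + 1) x x) {a : A}
    (hcont : ∀ i, 1 ≤ i → i ≤ n - 1 → Continuous (s i a)) (hza : z ⤳ a) :
    ∀ i, 1 ≤ i → i ≤ n - 1 → s i a z ⤳ z := by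
  refine Nat.le_induction (fun h => ?_) (fun i hi ih h => ?_)
  · simpa only [h1] using hza.map (hcont 1 le_rfl h)
  · have hstep : s (i + 1) a z ⤳ s i a z := by
      simpa only [h2 i hi (by omega)] using hza.map (hcont (i + 1) (by omega) h)
    exact hstep.trans (ih (by omega))

theorem mem_gammaSet_of_subtractive_mem (h1 : ∀ x, s 1 x x = z)
    (h2 : ∀ i, 1 ≤ i → i ≤ n - 2 → ∀ x, s i x z = s (i + 1) x x)
    (hcont : ∀ i, 1 ≤ i → i ≤ n - 1 → Continuous (fun p : A × A => s i p.1 p.2))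
    {O : Set A} (hO : IsOpen O) (hzO : z ∉ O) :
    ∀ i, 1 ≤ i → i ≤ n - 1 → ∀ a, s i a z ∈ O → a ∈ gammaSet z i := by
  refine Nat.le_induction (fun h a ha => ?_) (fun i hi ih h a ha => ?_)
  · exact mem_gammaSet_succ_of_continuous (hcont 1 le_rfl h) hO ha
      fun x hx => absurd (h1 x ▸ hx) hzO
  · exact mem_gammaSet_succ_of_continuous (hcont (i + 1) (by omega) h) hO ha
      fun x hx => ih (by omega) x (h2 i hi (by omega) x ▸ hx)

end Subtractive

/-- An `n`-subtractive T0 topological algebra is `(n-1)`-step Hausdorff at `0`: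
`Γ (n-1) 0 = A \ {0}`. -/
theorem n_subtractive_step_hausdorff {A : Type*} [TopologicalSpace A] [T0Space A]
    (n : ℕ) (hn : 2 ≤ n)
    (s : ℕ → A → A → A) (z : A)
    (h1 : ∀ x, s 1 x x = z)
    (h2 : ∀ i, 1 ≤ i → i ≤ n - 2 → ∀ x, s i x z = s (i + 1) x x)
    (h3 : ∀ x, s (n - 1) x z = x)
    (hcont : ∀ i, 1 ≤ i → i ≤ n - 1 → Continuous (fun p : A × A => s i p.1 p.2)) :
    gammaSet z (n - 1) = {z}ᶜ := by
  ext a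
  refine ⟨fun ha (haz : a = z) => notMem_gammaSet z (n - 1) (haz ▸ ha), fun ha => ?_⟩
  have hza : ¬z ⤳ a := fun hza =>
    have haz : a ⤳ z := h3 a ▸ subtractive_specializes_of_specializes h1 h2
      (fun i hi hi' => (hcont i hi hi').comp (Continuous.prodMk_right a)) hza
      (n - 1) (by omega) le_rfl
    ha (haz.antisymm hza).eq
  obtain ⟨O, hO, haO, hzO⟩ := not_specializes_iff_exists_open.mp hza
  exact mem_gammaSet_of_subtractive_mem h1 h2 hcont hO hzO (n - 1) (by omega) le_rfl a
    ((h3 a).symm ▸ haO)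
end

section
/- Let A be an algebra of some signature possessing, for some n ≥ 2, ternary term operations p₁, …, p_{n-1} satisfying x = p₁(x,y,y), pᵢ(x,x,y) = p_{i+1}(x,y,y) for 1 ≤ i ≤ n−2, and p_{n-1}(x,x,y) = y (Mal'cev conditions for n-permutability). Then every compatible preorder ≤ on A is symmetric: a ≤ b implies b ≤ a. -/
/-!
If `a ≤ b`, monotonicity in the middle argument gives `pᵢ(a,a,b) ≤ pᵢ(a,b,b)`, and the Mal'cev
identities glue these inequalities into the chain
`b = pₙ₋₁(a,a,b) ≤ pₙ₋₁(a,b,b) = pₙ₋₂(a,a,b) ≤ ⋯ ≤ p₁(a,b,b) = a`.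
-/

section MalcevChain

variable {A : Type*} {le : A → A → Prop} {p : ℕ → A → A → A → A} {m : ℕ}

theorem malcev_le_left_of_le (hrefl : ∀ a, le a a) (htrans : ∀ a b c, le a b → le b c → le a c)
    (h1 : ∀ x y : A, x = p 1 x y y)
    (hstep : ∀ i, 1 ≤ i → i < m → ∀ x y : A, p i x x y = p (i + 1) x y y)
    (hmid : ∀ i, 1 ≤ i → i ≤ m → ∀ x y y' z, le y y' → le (p i x y z) (p i x y' z))
    {a b : A} (hab : le a b) :
    ∀ i, 1 ≤ i → i ≤ m → le (p i a b b) a := by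
  intro i hi
  induction i, hi using Nat.le_induction with
  | base => exact fun _ => h1 a b ▸ hrefl a
  | succ j hj ih =>
    intro hjm
    have hjm' : j ≤ m := Nat.le_of_succ_le hjm
    rw [← hstep j hj hjm a b]
    exact htrans _ _ _ (hmid j hj hjm' a a b b hab) (ih hjm')

end MalcevChain

/-- In an algebra with Mal'cev operations `p 1, …, p (n-1)` witnessing
`n`-permutability, every compatible preorder is symmetric. -/
theorem malcev_preorder_symmetric {A : Type*} (n : ℕ) (hn : 2 ≤ n)
    (p : ℕ → A → A → A → A)
    (h1 : ∀ x y : A, x = p 1 x y y)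
    (h2 : ∀ i, 1 ≤ i → i ≤ n - 2 → ∀ x y : A, p i x x y = p (i + 1) x y y)
    (h3 : ∀ x y : A, p (n - 1) x x y = y)
    (le : A → A → Prop)
    (hrefl : ∀ a, le a a)
    (htrans : ∀ a b c, le a b → le b c → le a c)
    (hmono : ∀ i, 1 ≤ i → i ≤ n - 1 →
      ∀ a b c a' b' c', le a a' → le b b' → le c c' →
        le (p i a b c) (p i a' b' c')) :
    ∀ a b, le a b → le b a := by
  intro a b hab
  have hmid : ∀ i, 1 ≤ i → i ≤ n - 1 → ∀ x y y' z, le y y' → le (p i x y z) (p i x y' z) :=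
    fun i hi hin x y y' z hy => hmono i hi hin x y z x y' z (hrefl x) hy (hrefl z)
  have hchain := malcev_le_left_of_le hrefl htrans h1
    (fun i hi hin => h2 i hi (by omega)) hmid hab (n - 1) (by omega) le_rfl
  rw [← h3 a b]
  exact htrans _ _ _ (hmid (n - 1) (by omega) le_rfl a a b b hab) hchain
end

section
/- Let (A, s, 0) be a subtractive algebra (s(x,x) = 0, s(x,0) = x) and ≤ a compatible partial order on A. Then every connected component of the poset (A, ≤) containing 0 is the singleton {0}; i.e., the equivalence class of 0 under the least equivalence relation containing ≤ is {0}. -/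
/-!
Monotonicity of `s` in its second argument turns `z ≤ a` into `s a z ≤ s a a`, i.e. `a ≤ z`, and
`a ≤ z` into `z ≤ a` in the same way; so `z` is comparable to nothing but itself. Hence
"being `z`" is respected by `≤`, and therefore by the equivalence relation it generates.
-/

theorem Relation.EqvGen.iff_of_forall_rel_iff {α : Type*} {r : α → α → Prop} {p : α → Prop}
    (hp : ∀ a b, r a b → (p a ↔ p b)) {a b : α} (h : Relation.EqvGen r a b) : p a ↔ p b :=
  Eq.to_iff (Setoid.eqvGen_le (s := Setoid.ker p) (fun a b hab => propext (hp a b hab)) h)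

section SubtractiveOrder

variable {A : Type*} [PartialOrder A] {s : A → A → A} {z : A}

theorem eq_of_zero_le_of_subtractive (h1 : ∀ x, s x x = z) (h2 : ∀ x, s x z = x)
    (mono : ∀ a b a' b', a ≤ b → a' ≤ b' → s a a' ≤ s b b') {a : A} (h : z ≤ a) : a = z := by
  have hsa : s a z ≤ s a a := mono a a z a le_rfl h
  rw [h2, h1] at hsa
  exact le_antisymm hsa h

theorem eq_of_le_zero_of_subtractive (h1 : ∀ x, s x x = z) (h2 : ∀ x, s x z = x)
    (mono : ∀ a b a' b', a ≤ b → a' ≤ b' → s a a' ≤ s b b') {a : A} (h : a ≤ z) : a = z := by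
  have hsa : s a a ≤ s a z := mono a a a z le_rfl h
  rw [h2, h1] at hsa
  exact le_antisymm h hsa

theorem eq_zero_iff_of_le_of_subtractive (h1 : ∀ x, s x x = z) (h2 : ∀ x, s x z = x)
    (mono : ∀ a b a' b', a ≤ b → a' ≤ b' → s a a' ≤ s b b') {a b : A} (hab : a ≤ b) :
    a = z ↔ b = z := by
  constructor
  · rintro rfl
    exact eq_of_zero_le_of_subtractive h1 h2 mono hab
  · rintro rfl
    exact eq_of_le_zero_of_subtractive h1 h2 mono hab

end SubtractiveOrder

/-- In a subtractive algebra with a compatible partial order, the connected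
component of `0` (its class under the least equivalence relation containing `≤`)
is the singleton `{0}`. -/
theorem subtractive_component_of_zero {A : Type*} [PartialOrder A]
    (s : A → A → A) (z : A)
    (h1 : ∀ x, s x x = z) (h2 : ∀ x, s x z = x)
    (mono : ∀ a b a' b', a ≤ b → a' ≤ b' → s a a' ≤ s b b') :
    {a : A | Relation.EqvGen (· ≤ ·) z a} = {z} := by
  ext a
  constructor
  · intro h
    exact (h.iff_of_forall_rel_iff (p := (· = z))
      (fun _ _ => eq_zero_iff_of_le_of_subtractive h1 h2 mono)).1 rfl
  · rintro rfl
    exact Relation.EqvGen.refl _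
end
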